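/- The weakening rule via existential quantifier for inclusion atoms is sound: if M ⊨_X 𝗑 ⊆ 𝗒, then M ⊨_X ∃w(𝗑w ⊆ 𝗒z), for any variable z and any variable w not among 𝗑, 𝗒, z. -/

import Mathlib

/-!
Choose for `w`, at each assignment `s`, the values `s' z` of all assignments `s'` that witness
the inclusion `𝗑 ⊆ 𝗒` for `s`. An extended assignment `s(s' z / w)` is then matched by any
extension of its own witness `s'`: the freshness of `w` keeps `𝗑` and `𝗒` unchanged, and `s'`
still carries `s' z` at `z ≠ w`.
-/

namespace TeamSem

variable {M : Type}

/-- A team is a set of assignments (variables are natural numbers). -/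
abbrev Team (M : Type) := Set (ℕ → M)

/-- Lax existential extension of a team `X` along variable `x` by a choice function `F`. -/
def extT (X : Team M) (x : ℕ) (F : (ℕ → M) → Set M) : Team M :=
  {t | ∃ s ∈ X, ∃ a ∈ F s, t = Function.update s x a}

/-- Universal extension of a team `X` along variable `x`. -/
def extAll (X : Team M) (x : ℕ) : Team M :=
  {t | ∃ s ∈ X, ∃ a : M, t = Function.update s x a}

/-- Team semantics of the inclusion atom `xs ⊆ ys`. -/
def inclSat (X : Team M) (xs ys : List ℕ) : Prop :=
  ∀ s ∈ X, ∃ s' ∈ X, xs.map s = ys.map s'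

lemma _root_.List.map_update_of_notMem {α β : Type*} [DecidableEq α] (f : α → β) {a : α}
    (b : β) {l : List α} (ha : a ∉ l) : l.map (Function.update f a b) = l.map f :=
  List.map_congr_left fun _ hv => Function.update_of_ne (ne_of_mem_of_not_mem hv ha) b f

lemma update_mem_extT {X : Team M} {w : ℕ} {F : (ℕ → M) → Set M} {s : ℕ → M} {a : M}
    (hs : s ∈ X) (ha : a ∈ F s) : Function.update s w a ∈ extT X w F :=
  ⟨s, hs, a, ha, rfl⟩

def inclWitnessValues (X : Team M) (x y : List ℕ) (z : ℕ) (s : ℕ → M) : Set M :=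
  (fun s' => s' z) '' {s' ∈ X | x.map s = y.map s'}

lemma inclWitnessValues_nonempty {X : Team M} {x y : List ℕ} (h : inclSat X x y) (z : ℕ)
    {s : ℕ → M} (hs : s ∈ X) : (inclWitnessValues X x y z s).Nonempty :=
  let ⟨s', hs', hxy⟩ := h s hs
  ⟨s' z, s', ⟨hs', hxy⟩, rfl⟩

lemma inclSat_extT_inclWitnessValues {X : Team M} {x y : List ℕ} {z w : ℕ}
    (hwx : w ∉ x) (hwy : w ∉ y) (hwz : w ≠ z) (h : inclSat X x y) :
    inclSat (extT X w (inclWitnessValues X x y z)) (x ++ [w]) (y ++ [z]) := by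
  rintro _ ⟨s, -, _, ⟨s', ⟨hs', hxy⟩, rfl⟩, rfl⟩
  obtain ⟨b, hb⟩ := inclWitnessValues_nonempty h z hs'
  refine ⟨Function.update s' w b, update_mem_extT hs' hb, ?_⟩
  simp only [List.map_append, List.map_cons, List.map_nil, List.map_update_of_notMem _ _ hwx,
    List.map_update_of_notMem _ _ hwy, Function.update_self, Function.update_of_ne hwz.symm, hxy]

theorem incl_weakening_ex (X : Team M) (x y : List ℕ) (z w : ℕ)
    (hwx : w ∉ x) (hwy : w ∉ y) (hwz : w ≠ z)
    (h : inclSat X x y) :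
    ∃ F : (ℕ → M) → Set M, (∀ s ∈ X, (F s).Nonempty) ∧
      inclSat (extT X w F) (x ++ [w]) (y ++ [z]) :=
  ⟨inclWitnessValues X x y z, fun _ hs => inclWitnessValues_nonempty h z hs,
    inclSat_extT_inclWitnessValues hwx hwy hwz h⟩

end TeamSem
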